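/- Let (p_t)_{t≥1} and (x_t)_{t≥0} satisfy: p_t, x_t nonnegative, (p_t, E[p_{t+1}|ℱ_t]) ∈ G_t^×(ω) a.s. (dual path property) and p_t·x_{t-1} = 1 a.s. (support property), where the path satisfies (x_{t-1}, x_t) ∈ G_t(ω) a.s. Then for any other path (y_t)_{t≥0} with p_t·y_{t-1} > 0 a.s., the conditional expected growth rate satisfies E[p_{t+1}·y_t | ℱ_t] / (p_t·y_{t-1}) ≤ 1 = E[p_{t+1}·x_t | ℱ_t] / (p_t·x_{t-1}) almost surely. -/

import Mathlib

open MeasureTheory Filter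

lemma condexp_pi_apply {Ω : Type*} {m : MeasurableSpace Ω} {mΩ : MeasurableSpace Ω}
    (hm : m ≤ mΩ) (μ : Measure Ω) [IsFiniteMeasure μ] {n : ℕ}
    {f : Ω → Fin n → ℝ} (hf : Integrable f μ) (i : Fin n) :
    (fun ω => (μ[f|m]) ω i) =ᵐ[μ] μ[fun ω => f ω i|m] := by
  haveI : SigmaFinite (μ.trim hm) := by
    haveI : IsFiniteMeasure (μ.trim hm) := isFiniteMeasure_trim hm
    infer_instance
  refine ae_eq_condExp_of_forall_setIntegral_eq hm
    ((ContinuousLinearMap.proj (R := ℝ) (φ := fun _ : Fin n => ℝ) i).integrable_comp hf)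
    (fun s hs hμs => ?_) (fun s hs hμs => ?_) ?_
  · exact ((ContinuousLinearMap.proj (R := ℝ) (φ := fun _ : Fin n => ℝ) i).integrable_comp
      (integrable_condExp (f := f) (m := m) (μ := μ))).integrableOn
  · have h1 := setIntegral_condExp hm hf hs
    have h2 := (ContinuousLinearMap.proj (R := ℝ) (φ := fun _ : Fin n => ℝ) i).integral_comp_comm
      ((integrable_condExp (f := f) (m := m) (μ := μ)).integrableOn (s := s))
    have h3 := (ContinuousLinearMap.proj (R := ℝ) (φ := fun _ : Fin n => ℝ) i).integral_comp_comm
      (hf.integrableOn (s := s))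
    simp only [ContinuousLinearMap.proj_apply] at h2 h3
    rw [h2, h3, h1]
  · exact (((continuous_apply i).comp_stronglyMeasurable
      (stronglyMeasurable_condExp (f := f) (m := m) (μ := μ)))).aestronglyMeasurable

/-- Rapid paths maximize conditional expected growth rates: for any competing path y,
E[p_{t+1}·y_t | F_t]/(p_t·y_{t-1}) ≤ 1 = E[p_{t+1}·x_t | F_t]/(p_t·x_{t-1}) a.s. -/
theorem stmt18 {Ω : Type*} {mΩ : MeasurableSpace Ω} (μ : Measure Ω) [IsProbabilityMeasure μ]
    {m : MeasurableSpace Ω} (hm : m ≤ mΩ)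
    (n : ℕ) (G : Ω → Set ((Fin n → ℝ) × (Fin n → ℝ)))
    (p pnext : Ω → Fin n → ℝ)
    (hpm : Measurable[m] p) (hpi : Integrable p μ) (hpn : ∀ ω i, 0 ≤ p ω i)
    (hpnexti : Integrable pnext μ) (hpnextn : ∀ ω i, 0 ≤ pnext ω i)
    (xprev x : Ω → Fin n → ℝ)
    (hxprevm : Measurable[m] xprev) (hxprevb : ∃ C, ∀ ω, ‖xprev ω‖ ≤ C)
    (hxprevn : ∀ ω i, 0 ≤ xprev ω i)
    (hxm : Measurable[m] x) (hxb : ∃ C, ∀ ω, ‖x ω‖ ≤ C) (hxn : ∀ ω i, 0 ≤ x ω i)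
    (hxpath : ∀ᵐ ω ∂μ, (xprev ω, x ω) ∈ G ω)
    (hdual : ∀ᵐ ω ∂μ, ∀ ab ∈ G ω,
        ∑ i, (μ[pnext | m]) ω i * ab.2 i ≤ ∑ i, p ω i * ab.1 i)
    (hsupp : ∀ᵐ ω ∂μ, ∑ i, p ω i * xprev ω i = 1)
    (hsuppnext : ∀ᵐ ω ∂μ, ∑ i, pnext ω i * x ω i = 1)
    (yprev y : Ω → Fin n → ℝ)
    (hyprevm : Measurable[m] yprev) (hyprevb : ∃ C, ∀ ω, ‖yprev ω‖ ≤ C)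
    (hyprevn : ∀ ω i, 0 ≤ yprev ω i)
    (hym : Measurable[m] y) (hyb : ∃ C, ∀ ω, ‖y ω‖ ≤ C) (hyn : ∀ ω i, 0 ≤ y ω i)
    (hypath : ∀ᵐ ω ∂μ, (yprev ω, y ω) ∈ G ω)
    (hypos : ∀ᵐ ω ∂μ, 0 < ∑ i, p ω i * yprev ω i) :
    ∀ᵐ ω ∂μ,
      (μ[fun ω' => ∑ i, pnext ω' i * y ω' i | m]) ω / (∑ i, p ω i * yprev ω i) ≤ 1 ∧
      (μ[fun ω' => ∑ i, pnext ω' i * x ω' i | m]) ω / (∑ i, p ω i * xprev ω i) = 1 := by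
  obtain ⟨C, hC⟩ := hyb
  -- integrability of each pnext_i * y_i
  have hyint : ∀ i : Fin n, Integrable (fun ω => y ω i * pnext ω i) μ := by
    intro i
    refine Integrable.bdd_mul ((ContinuousLinearMap.proj (R := ℝ)
      (φ := fun _ : Fin n => ℝ) i).integrable_comp hpnexti)
      ((hym.eval (a := i)).mono hm le_rfl).aestronglyMeasurable (c := C) (Eventually.of_forall fun ω => ?_)
    exact (norm_le_pi_norm (y ω) i).trans (hC ω)
  -- pull out m-measurable factor
  have hymeas : ∀ i : Fin n, StronglyMeasurable[m] (fun ω => y ω i) :=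
    fun i => (hym.eval (a := i)).stronglyMeasurable
  have hpull : ∀ i : Fin n,
      μ[fun ω => y ω i * pnext ω i|m] =ᵐ[μ] fun ω => y ω i * (μ[fun ω' => pnext ω' i|m]) ω := by
    intro i
    have := condExp_stronglyMeasurable_mul_of_bound (μ := μ) hm (hymeas i)
      ((ContinuousLinearMap.proj (R := ℝ) (φ := fun _ : Fin n => ℝ) i).integrable_comp hpnexti)
      C (Eventually.of_forall fun ω => (norm_le_pi_norm (y ω) i).trans (hC ω))
    exact this
  have hsum : (fun ω => ∑ i, pnext ω i * y ω i) = fun ω => ∑ i, y ω i * pnext ω i := by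
    funext ω; exact Finset.sum_congr rfl fun i _ => mul_comm _ _
  have hcsum : μ[fun ω' => ∑ i, pnext ω' i * y ω' i|m]
      =ᵐ[μ] fun ω => ∑ i, y ω i * (μ[fun ω' => pnext ω' i|m]) ω := by
    rw [hsum]
    have hfn : (fun ω => ∑ i, y ω i * pnext ω i)
        = ∑ i : Fin n, fun ω => y ω i * pnext ω i := by
      funext ω; simp [Finset.sum_apply]
    rw [hfn]
    refine (condExp_finsetSum (fun i _ => hyint i) m).trans ?_
    have : ∀ᵐ ω ∂μ, ∀ i : Fin n,
        (μ[fun ω' => y ω' i * pnext ω' i|m]) ω = y ω i * (μ[fun ω' => pnext ω' i|m]) ω :=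
      ae_all_iff.2 fun i => hpull i
    filter_upwards [this] with ω hω
    simp only [Finset.sum_apply]
    exact Finset.sum_congr rfl fun i _ => hω i
  -- component identification
  have hcomp : ∀ᵐ ω ∂μ, ∀ i : Fin n,
      (μ[fun ω' => pnext ω' i|m]) ω = (μ[pnext|m]) ω i :=
    ae_all_iff.2 fun i => (condexp_pi_apply hm μ hpnexti i).symm
  -- the x part: conditional expectation is 1
  have hx1 : μ[fun ω' => ∑ i, pnext ω' i * x ω' i|m] =ᵐ[μ] fun _ => (1 : ℝ) := by
    refine (condExp_congr_ae (g := fun _ => (1 : ℝ)) hsuppnext).trans ?_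
    rw [condExp_const hm (1 : ℝ)]
  filter_upwards [hcsum, hcomp, hdual, hypath, hypos, hx1, hsupp] with ω hcs hcp hd hyp hpos h1 hsp
  constructor
  · rw [div_le_one hpos, hcs]
    calc ∑ i, y ω i * (μ[fun ω' => pnext ω' i|m]) ω
        = ∑ i, (μ[pnext|m]) ω i * y ω i := by
          refine Finset.sum_congr rfl fun i hi => ?_
          rw [hcp i, mul_comm]
      _ ≤ ∑ i, p ω i * yprev ω i := hd _ hyp
  · rw [h1, hsp, div_one]
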